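/- arXiv:2412.14396 — 6 statements merged into one kernel-verified Lean document; each statement's English description precedes it below -/
import Mathlib

section
/- Suppose X and X' are real random variables supported in [−B, B] that are (ε, 0)-indistinguishable (i.e., for every measurable set S, Pr[X ∈ S] ≤ e^ε Pr[X' ∈ S] and Pr[X' ∈ S] ≤ e^ε Pr[X ∈ S]), with E[X] = 0 and Var[X] = b². Then E[X'] ≤ C·(e^ε − 1)·b for some universal constant C. -/
/-!
Put `A = E_μ[X⁺] = E_μ[X⁻]` (equal because `E_μ[X] = 0`), so that `2A = E_μ|X| ≤ b`, the last step
being `Var_μ |X| ≥ 0`. The bounds `ν ≤ e^ε μ` and `μ ≤ e^ε ν` give `E_ν[X⁺] ≤ e^ε A` and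
`E_ν[X⁻] ≥ e^{-ε} A`, hence `E_ν[X] ≤ (e^ε - e^{-ε}) A ≤ (e^ε - 1) 2A ≤ (e^ε - 1) b`: `C = 1` works.
-/

open MeasureTheory ProbabilityTheory

namespace MeasureTheory

section Domination

variable {α : Type*} [MeasurableSpace α] {μ ν : Measure α}

lemma Measure.le_smul_of_forall_le_mul {c : ENNReal}
    (h : ∀ s, MeasurableSet s → ν s ≤ c * μ s) : ν ≤ c • μ :=
  Measure.le_iff.2 fun s hs ↦ by simpa using h s hs

lemma integral_le_mul_integral_of_le_smul {c : ENNReal} (hc : c ≠ ⊤) (hνμ : ν ≤ c • μ)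
    {f : α → ℝ} (hf₀ : 0 ≤ f) (hf : Integrable f μ) :
    ∫ x, f x ∂ν ≤ c.toReal * ∫ x, f x ∂μ := by
  calc ∫ x, f x ∂ν ≤ ∫ x, f x ∂(c • μ) :=
        integral_mono_measure hνμ (ae_of_all _ hf₀) (hf.smul_measure hc)
    _ = c.toReal * ∫ x, f x ∂μ := by rw [integral_smul_measure, smul_eq_mul]

lemma integral_le_of_mutually_le_smul {c : ℝ} (hc : 0 < c) (hνμ : ν ≤ ENNReal.ofReal c • μ)
    (hμν : μ ≤ ENNReal.ofReal c • ν) {f : α → ℝ} (hf : Integrable f μ) :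
    ∫ x, f x ∂ν ≤ c * ∫ x, (f x)⁺ ∂μ - c⁻¹ * ∫ x, (f x)⁻ ∂μ := by
  have hfν : Integrable f ν := (hf.smul_measure ENNReal.ofReal_ne_top).mono_measure hνμ
  have hpos : ∫ x, (f x)⁺ ∂ν ≤ c * ∫ x, (f x)⁺ ∂μ := by
    simpa [ENNReal.toReal_ofReal hc.le] using integral_le_mul_integral_of_le_smul
      ENNReal.ofReal_ne_top hνμ (fun x ↦ posPart_nonneg (f x)) hf.pos_part
  have hneg : ∫ x, (f x)⁻ ∂μ ≤ c * ∫ x, (f x)⁻ ∂ν := by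
    simpa [ENNReal.toReal_ofReal hc.le] using integral_le_mul_integral_of_le_smul
      ENNReal.ofReal_ne_top hμν (fun x ↦ negPart_nonneg (f x)) hfν.neg_part
  have hsplit : ∫ x, f x ∂ν = ∫ x, (f x)⁺ ∂ν - ∫ x, (f x)⁻ ∂ν := by
    rw [← integral_sub (f := fun x ↦ (f x)⁺) (g := fun x ↦ (f x)⁻) hfν.pos_part hfν.neg_part]
    simp only [posPart_sub_negPart]
  have hneg' : c⁻¹ * ∫ x, (f x)⁻ ∂μ ≤ ∫ x, (f x)⁻ ∂ν := (inv_mul_le_iff₀ hc).2 hneg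
  linarith

end Domination

section MeanZero

variable {Ω : Type*} [MeasurableSpace Ω] {μ : Measure Ω} {f : Ω → ℝ}

lemma integral_posPart_eq_integral_negPart (hf : Integrable f μ) (h₀ : ∫ x, f x ∂μ = 0) :
    ∫ x, (f x)⁺ ∂μ = ∫ x, (f x)⁻ ∂μ := by
  rw [← sub_eq_zero,
    ← integral_sub (f := fun x ↦ (f x)⁺) (g := fun x ↦ (f x)⁻) hf.pos_part hf.neg_part]
  simpa only [posPart_sub_negPart] using h₀

lemma two_mul_integral_posPart_eq_integral_abs (hf : Integrable f μ) (h₀ : ∫ x, f x ∂μ = 0) :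
    2 * ∫ x, (f x)⁺ ∂μ = ∫ x, |f x| ∂μ := by
  have hsplit : ∫ x, |f x| ∂μ = ∫ x, (f x)⁺ ∂μ + ∫ x, (f x)⁻ ∂μ := by
    rw [← integral_add (f := fun x ↦ (f x)⁺) (g := fun x ↦ (f x)⁻) hf.pos_part hf.neg_part]
    simp only [posPart_add_negPart]
  rw [hsplit, ← integral_posPart_eq_integral_negPart hf h₀, two_mul]

lemma sq_integral_abs_le_integral_sq [IsProbabilityMeasure μ] (hf : MemLp f 2 μ) :
    (∫ x, |f x| ∂μ) ^ 2 ≤ ∫ x, f x ^ 2 ∂μ := by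
  have hvar := variance_eq_sub hf.abs
  simp only [Pi.pow_apply, Pi.abs_apply, sq_abs] at hvar
  linarith [variance_nonneg |f| μ]

lemma integral_le_of_mutually_le_smul_of_integral_eq_zero [IsProbabilityMeasure μ] {ν : Measure Ω}
    {c b : ℝ} (hc : 1 ≤ c) (hνμ : ν ≤ ENNReal.ofReal c • μ) (hμν : μ ≤ ENNReal.ofReal c • ν)
    (hf : MemLp f 2 μ) (h₀ : ∫ x, f x ∂μ = 0) (hb : 0 ≤ b) (hf₂ : ∫ x, f x ^ 2 ∂μ ≤ b ^ 2) :
    ∫ x, f x ∂ν ≤ (c - 1) * b := by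
  have hf₁ : Integrable f μ := hf.integrable one_le_two
  set A := ∫ x, (f x)⁺ ∂μ
  have hA : 0 ≤ A := integral_nonneg fun x ↦ posPart_nonneg (f x)
  have h2A : 2 * A ≤ b := by
    rw [two_mul_integral_posPart_eq_integral_abs hf₁ h₀]
    refine (pow_le_pow_iff_left₀ (integral_nonneg fun x ↦ abs_nonneg (f x)) hb two_ne_zero).1 ?_
    exact (sq_integral_abs_le_integral_sq hf).trans hf₂
  have hc₀ : 0 < c := one_pos.trans_le hc
  calc ∫ x, f x ∂ν ≤ c * A - c⁻¹ * A := by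
        simpa only [← integral_posPart_eq_integral_negPart hf₁ h₀] using
          integral_le_of_mutually_le_smul hc₀ hνμ hμν hf₁
    _ ≤ (c - 1) * (2 * A) := by
        rw [← sub_nonneg]
        have hgap : (c - 1) * (2 * A) - (c * A - c⁻¹ * A) = c⁻¹ * (c - 1) ^ 2 * A := by
          field_simp; ring
        rw [hgap]; positivity
    _ ≤ (c - 1) * b := by gcongr

end MeanZero

end MeasureTheory

theorem stmt_2 : ∃ C > 0, ∀ (B b ε : ℝ), 0 < B → 0 < b → 0 < ε →
    ∀ (μ ν : Measure ℝ), IsProbabilityMeasure μ → IsProbabilityMeasure ν →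
    μ (Set.Icc (-B) B)ᶜ = 0 → ν (Set.Icc (-B) B)ᶜ = 0 →
    (∀ S : Set ℝ, MeasurableSet S →
      μ S ≤ ENNReal.ofReal (Real.exp ε) * ν S ∧
      ν S ≤ ENNReal.ofReal (Real.exp ε) * μ S) →
    (∫ x, x ∂μ) = 0 → (∫ x, x ^ 2 ∂μ) = b ^ 2 →
    (∫ x, x ∂ν) ≤ C * (Real.exp ε - 1) * b := by
  refine ⟨1, one_pos, fun B b ε _ hb hε μ ν _ _ hμB _ hind hmean hvar => ?_⟩
  have hbdd : ∀ᵐ x ∂μ, ‖x‖ ≤ B := by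
    filter_upwards [mem_ae_iff.2 hμB] with x hx using abs_le.2 hx
  rw [one_mul]
  exact integral_le_of_mutually_le_smul_of_integral_eq_zero (Real.one_le_exp hε.le)
    (Measure.le_smul_of_forall_le_mul fun s hs ↦ (hind s hs).2)
    (Measure.le_smul_of_forall_le_mul fun s hs ↦ (hind s hs).1)
    (MemLp.of_bound aestronglyMeasurable_id B hbdd) hmean hb.le hvar.le
end

section
/- Suppose X and X' are real random variables supported in [−B, B] that are (ε, δ)-indistinguishable, with E[X] = 0 and Var[X] = b². Then E[X'] ≤ C·((e^ε − 1)·b + B·δ) for some universal constant C. -/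
open MeasureTheory Set

theorem stmt_3 : ∃ C > 0, ∀ (B b ε δ : ℝ), 0 < B → 0 < b → 0 < ε → 0 ≤ δ → δ < 1 →
    ∀ (μ ν : Measure ℝ), IsProbabilityMeasure μ → IsProbabilityMeasure ν →
    μ (Set.Icc (-B) B)ᶜ = 0 → ν (Set.Icc (-B) B)ᶜ = 0 →
    (∀ S : Set ℝ, MeasurableSet S →
      μ S ≤ ENNReal.ofReal (Real.exp ε) * ν S + ENNReal.ofReal δ ∧
      ν S ≤ ENNReal.ofReal (Real.exp ε) * μ S + ENNReal.ofReal δ) →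
    (∫ x, x ∂μ) = 0 → (∫ x, x ^ 2 ∂μ) = b ^ 2 →
    (∫ x, x ∂ν) ≤ C * ((Real.exp ε - 1) * b + B * δ) := by
  refine ⟨2, by norm_num, ?_⟩
  intro B b ε δ hB hb hε hδ hδ1 μ ν hμp hνp hμs hνs hind hμmean hμvar
  haveI := hμp; haveI := hνp
  set e := Real.exp ε with he
  have he1 : (1:ℝ) ≤ e := by
    rw [he]; nlinarith [Real.add_one_le_exp ε, hε.le]
  have hepos : (0:ℝ) < e := lt_of_lt_of_le one_pos he1
  -- general facts about measures supported in [-B, B]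
  have main : ∀ κ : Measure ℝ, IsProbabilityMeasure κ → κ (Set.Icc (-B) B)ᶜ = 0 →
      Integrable (fun x => x) κ ∧ Integrable (fun x => x ^ 2) κ ∧
      Integrable (fun x => max x 0) κ ∧ Integrable (fun x => max (-x) 0) κ ∧
      (∫ x, max x 0 ∂κ) = ∫ t in Ioc 0 B, (κ (Ici t)).toReal ∧
      (∫ x, max (-x) 0 ∂κ) = ∫ t in Ioc 0 B, (κ (Iic (-t))).toReal := by
    intro κ hκp hκs
    haveI := hκp
    have hae : ∀ᵐ x ∂κ, x ∈ Set.Icc (-B) B := by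
      rw [ae_iff]
      exact hκs
    have haeabs : ∀ᵐ x ∂κ, |x| ≤ B := by
      filter_upwards [hae] with x hx
      exact abs_le.mpr ⟨hx.1, hx.2⟩
    have hint1 : Integrable (fun x => x) κ := by
      refine (integrable_const B).mono' measurable_id.aestronglyMeasurable ?_
      filter_upwards [haeabs] with x hx
      simpa using hx
    have hint2 : Integrable (fun x => x ^ 2) κ := by
      refine (integrable_const (B ^ 2)).mono'
        (measurable_id.pow_const 2).aestronglyMeasurable ?_
      filter_upwards [haeabs] with x hx
      have h1 : x ≤ B := (abs_le.mp hx).2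
      have h2 : -B ≤ x := (abs_le.mp hx).1
      have : x ^ 2 ≤ B ^ 2 := by nlinarith
      simpa [Real.norm_eq_abs, abs_of_nonneg (sq_nonneg x)] using this
    have hintp : Integrable (fun x => max x 0) κ := hint1.pos_part
    have hintn : Integrable (fun x => max (-x) 0) κ := hint1.neg_part
    refine ⟨hint1, hint2, hintp, hintn, ?_, ?_⟩
    · have hl := hintp.integral_eq_integral_Ioc_meas_le (M := B)
        (Filter.Eventually.of_forall fun x => le_max_right _ _)
        (by filter_upwards [hae] with x hx; exact max_le hx.2 hB.le)
      rw [hl]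
      refine setIntegral_congr_fun measurableSet_Ioc fun t ht => ?_
      have hset : {a : ℝ | t ≤ max a 0} = Ici t := by
        ext a
        simp only [Set.mem_setOf_eq, Set.mem_Ici]
        constructor
        · intro h
          rcases le_or_gt a 0 with h' | h'
          · exfalso; rw [max_eq_right h'] at h; exact absurd h (not_le.mpr ht.1)
          · rwa [max_eq_left h'.le] at h
        · intro h; exact le_trans h (le_max_left _ _)
      rw [hset]; rfl
    · have hl := hintn.integral_eq_integral_Ioc_meas_le (M := B)
        (Filter.Eventually.of_forall fun x => le_max_right _ _)
        (by filter_upwards [hae] with x hx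
            exact max_le (by linarith [hx.1]) hB.le)
      rw [hl]
      refine setIntegral_congr_fun measurableSet_Ioc fun t ht => ?_
      have hset : {a : ℝ | t ≤ max (-a) 0} = Iic (-t) := by
        ext a
        simp only [Set.mem_setOf_eq, Set.mem_Iic]
        constructor
        · intro h
          rcases le_or_gt (-a) 0 with h' | h'
          · exfalso; rw [max_eq_right h'] at h; exact absurd h (not_le.mpr ht.1)
          · rw [max_eq_left h'.le] at h; linarith
        · intro h; exact le_trans (by linarith : t ≤ -a) (le_max_left _ _)
      rw [hset]; rfl
  obtain ⟨hμ1, hμ2, hμp', hμn', hμlp, hμln⟩ := main μ hμp hμs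
  obtain ⟨hν1, hν2, hνp', hνn', hνlp, hνln⟩ := main ν hνp hνs
  -- comparison of measures after toReal
  have hcomp : ∀ S : Set ℝ, MeasurableSet S →
      (ν S).toReal ≤ e * (μ S).toReal + δ ∧ (μ S).toReal ≤ e * (ν S).toReal + δ := by
    intro S hS
    obtain ⟨h1, h2⟩ := hind S hS
    have key : ∀ (κ κ' : Measure ℝ), IsFiniteMeasure κ → IsFiniteMeasure κ' →
        κ S ≤ ENNReal.ofReal e * κ' S + ENNReal.ofReal δ →
        (κ S).toReal ≤ e * (κ' S).toReal + δ := by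
      intro κ κ' hκ hκ' h
      haveI := hκ; haveI := hκ'
      have hfin : ENNReal.ofReal e * κ' S + ENNReal.ofReal δ ≠ ⊤ := by
        refine ENNReal.add_ne_top.mpr ⟨ENNReal.mul_ne_top ENNReal.ofReal_ne_top ?_, ENNReal.ofReal_ne_top⟩
        exact measure_ne_top κ' S
      calc (κ S).toReal ≤ (ENNReal.ofReal e * κ' S + ENNReal.ofReal δ).toReal :=
            ENNReal.toReal_mono hfin h
        _ = e * (κ' S).toReal + δ := by
            rw [ENNReal.toReal_add (ENNReal.mul_ne_top ENNReal.ofReal_ne_top (measure_ne_top κ' S))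
              ENNReal.ofReal_ne_top, ENNReal.toReal_mul, ENNReal.toReal_ofReal hepos.le,
              ENNReal.toReal_ofReal hδ]
    exact ⟨key ν μ inferInstance inferInstance h2, key μ ν inferInstance inferInstance h1⟩
  -- integrability of tail functions on Ioc 0 B
  have tail_int : ∀ (f : ℝ → ℝ), Antitone f → (∀ t, 0 ≤ f t) → (∀ t, f t ≤ 1) →
      IntegrableOn f (Ioc 0 B) := by
    intro f hf h0 h1
    refine Integrable.mono' (g := fun _ => (1:ℝ))
      (integrableOn_const measure_Ioc_lt_top.ne) hf.measurable.aestronglyMeasurable ?_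
    refine Filter.Eventually.of_forall fun t => ?_
    rw [Real.norm_eq_abs, abs_of_nonneg (h0 t)]
    exact h1 t
  have antIci : ∀ κ : Measure ℝ, IsProbabilityMeasure κ →
      Antitone (fun t => (κ (Ici t)).toReal) := by
    intro κ hκ s t hst
    haveI := hκ
    exact ENNReal.toReal_mono (measure_ne_top κ _) (measure_mono (Ici_subset_Ici.mpr hst))
  have antIic : ∀ κ : Measure ℝ, IsProbabilityMeasure κ →
      Antitone (fun t => (κ (Iic (-t))).toReal) := by
    intro κ hκ s t hst
    haveI := hκ
    exact ENNReal.toReal_mono (measure_ne_top κ _)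
      (measure_mono (Iic_subset_Iic.mpr (by linarith)))
  have tle1 : ∀ (κ : Measure ℝ), IsProbabilityMeasure κ → ∀ S : Set ℝ, (κ S).toReal ≤ 1 := by
    intro κ hκ S
    haveI := hκ
    simpa using ENNReal.toReal_mono ENNReal.one_ne_top prob_le_one
  have intμIci := tail_int _ (antIci μ hμp) (fun t => ENNReal.toReal_nonneg) (fun t => tle1 μ hμp _)
  have intνIci := tail_int _ (antIci ν hνp) (fun t => ENNReal.toReal_nonneg) (fun t => tle1 ν hνp _)
  have intμIic := tail_int _ (antIic μ hμp) (fun t => ENNReal.toReal_nonneg) (fun t => tle1 μ hμp _)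
  have intνIic := tail_int _ (antIic ν hνp) (fun t => ENNReal.toReal_nonneg) (fun t => tle1 ν hνp _)
  have volIoc : (volume (Ioc (0:ℝ) B)).toReal = B := by
    simp [Real.volume_Ioc, hB.le]
  -- positive part bound
  have hPν : (∫ x, max x 0 ∂ν) ≤ e * (∫ x, max x 0 ∂μ) + δ * B := by
    rw [hνlp, hμlp]
    calc (∫ t in Ioc 0 B, (ν (Ici t)).toReal)
        ≤ ∫ t in Ioc 0 B, (e * (μ (Ici t)).toReal + δ) := by
          refine setIntegral_mono_on intνIci ((intμIci.const_mul e).add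
            (integrableOn_const measure_Ioc_lt_top.ne)) measurableSet_Ioc
            fun t _ => (hcomp (Ici t) measurableSet_Ici).1
      _ = e * (∫ t in Ioc 0 B, (μ (Ici t)).toReal) + δ * B := by
          rw [integral_add (intμIci.const_mul e)
            (integrableOn_const measure_Ioc_lt_top.ne),
            integral_const_mul, setIntegral_const, measureReal_def, volIoc, smul_eq_mul, mul_comm B δ]
  -- negative part bound
  have hNμ : (∫ x, max (-x) 0 ∂μ) ≤ e * (∫ x, max (-x) 0 ∂ν) + δ * B := by
    rw [hνln, hμln]
    calc (∫ t in Ioc 0 B, (μ (Iic (-t))).toReal)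
        ≤ ∫ t in Ioc 0 B, (e * (ν (Iic (-t))).toReal + δ) := by
          refine setIntegral_mono_on intμIic ((intνIic.const_mul e).add
            (integrableOn_const measure_Ioc_lt_top.ne)) measurableSet_Ioc
            fun t _ => (hcomp (Iic (-t)) measurableSet_Iic).2
      _ = e * (∫ t in Ioc 0 B, (ν (Iic (-t))).toReal) + δ * B := by
          rw [integral_add (intνIic.const_mul e)
            (integrableOn_const measure_Ioc_lt_top.ne),
            integral_const_mul, setIntegral_const, measureReal_def, volIoc, smul_eq_mul, mul_comm B δ]
  -- decompositions
  have hdecν : (∫ x, x ∂ν) = (∫ x, max x 0 ∂ν) - (∫ x, max (-x) 0 ∂ν) := by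
    rw [← integral_sub hνp' hνn']
    congr 1
    funext x
    exact (max_zero_sub_max_neg_zero_eq_self x).symm
  have hdecμ : (∫ x, max x 0 ∂μ) - (∫ x, max (-x) 0 ∂μ) = 0 := by
    rw [← integral_sub hμp' hμn']
    have : (fun x : ℝ => max x 0 - max (-x) 0) = fun x : ℝ => x :=
      funext fun x => max_zero_sub_max_neg_zero_eq_self x
    rw [this, hμmean]
  -- first moment bound via AM-GM
  have habs : (∫ x, |x| ∂μ) ≤ b := by
    have hpt : ∀ x : ℝ, |x| ≤ x ^ 2 / (2 * b) + b / 2 := by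
      intro x
      have h1 : (0:ℝ) ≤ (|x| - b) ^ 2 := sq_nonneg _
      have h2 : |x| ^ 2 = x ^ 2 := sq_abs x
      rw [div_add' _ _ _ (by positivity), le_div_iff₀ (by positivity)]
      nlinarith
    calc (∫ x, |x| ∂μ) ≤ ∫ x, (x ^ 2 / (2 * b) + b / 2) ∂μ := by
          refine integral_mono hμ1.abs ((hμ2.div_const _).add (integrable_const _))
            fun x => hpt x
      _ = b := by
          rw [integral_add (hμ2.div_const _) (integrable_const _), integral_div, hμvar,
            integral_const]
          simp only [probReal_univ, smul_eq_mul, one_mul]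
          field_simp
          ring
  have hPμabs : (∫ x, max x 0 ∂μ) + (∫ x, max (-x) 0 ∂μ) = ∫ x, |x| ∂μ := by
    rw [← integral_add hμp' hμn']
    congr 1
    funext x
    rcases le_total x 0 with h | h
    · rw [max_eq_right h, max_eq_left (by linarith), abs_of_nonpos h]; ring
    · rw [max_eq_left h, max_eq_right (by linarith), abs_of_nonneg h]; ring
  have hNμnn : (0:ℝ) ≤ ∫ x, max (-x) 0 ∂μ := integral_nonneg fun x => le_max_right _ _
  have hNνnn : (0:ℝ) ≤ ∫ x, max (-x) 0 ∂ν := integral_nonneg fun x => le_max_right _ _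
  -- final arithmetic
  set Pν := ∫ x, max x 0 ∂ν
  set Nν := ∫ x, max (-x) 0 ∂ν
  set Pμ := ∫ x, max x 0 ∂μ
  set Nμ := ∫ x, max (-x) 0 ∂μ
  have hPNμ : Pμ = Nμ := by linarith
  have hNμb : Nμ ≤ b := by linarith
  rw [hdecν]
  have final : e * (Pν - Nν) ≤ e * (2 * ((e - 1) * b + B * δ)) := by
    nlinarith [mul_le_mul_of_nonneg_left hPν hepos.le, hNμ, hNμnn, hNνnn, hPNμ,
      mul_nonneg (mul_nonneg (sub_nonneg.2 he1) (sub_nonneg.2 hNμb))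
        (by linarith : (0:ℝ) ≤ e + 1),
      mul_nonneg hb.le (sq_nonneg (e - 1)),
      mul_nonneg (mul_nonneg (sub_nonneg.2 he1) hδ) hB.le]
  exact le_of_mul_le_mul_left final hepos
end

section
/- Suppose X and X' are real random variables supported in [−B, B] that are (ε, 0)-indistinguishable, E[X] = 0, and Pr[X > t] ≤ exp(−t²/C²) for every t ≥ 4C√ε. Then E[X'] ≤ C'·C·√ε for some universal constant C'. -/
open MeasureTheory

private lemma layer_bound (π : Measure ℝ) [IsProbabilityMeasure π] (s b : ℝ) (hs : 0 < s)
    (hb : 0 < b)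
    (h : ∀ t : ℝ, s ≤ t → π {x | t < x} ≤ ENNReal.ofReal (Real.exp (-(b * t ^ 2)))) :
    ∫⁻ x, ENNReal.ofReal x ∂π ≤ ENNReal.ofReal (s + Real.sqrt (Real.pi / b)) := by
  have h0 : ∫⁻ x, ENNReal.ofReal x ∂π = ∫⁻ x, ENNReal.ofReal (max x 0) ∂π := by
    congr 1; ext x
    rcases le_or_gt 0 x with hx | hx
    · rw [max_eq_left hx]
    · rw [max_eq_right hx.le, ENNReal.ofReal_zero, ENNReal.ofReal_eq_zero.2 hx.le]
  rw [h0, lintegral_eq_lintegral_meas_lt π (Filter.Eventually.of_forall fun x => le_max_right x 0)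
    (measurable_id.max measurable_const).aemeasurable]
  have hcongr : ∫⁻ t in Set.Ioi (0:ℝ), π {a : ℝ | t < max a 0}
      = ∫⁻ t in Set.Ioi (0:ℝ), π {a : ℝ | t < a} := by
    apply setLIntegral_congr_fun measurableSet_Ioi
    intro t ht
    show π {a : ℝ | t < max a 0} = π {a : ℝ | t < a}
    congr 1
    ext a
    simp only [Set.mem_setOf_eq, lt_max_iff]
    exact ⟨fun h' => h'.resolve_right (fun h'' => absurd ht (not_lt.2 h''.le)), Or.inl⟩
  rw [hcongr]
  have hsplit : Set.Ioi (0:ℝ) = Set.Ioc 0 s ∪ Set.Ioi s := (Set.Ioc_union_Ioi_eq_Ioi hs.le).symm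
  rw [hsplit, lintegral_union measurableSet_Ioi (Set.Ioc_disjoint_Ioi le_rfl)]
  have h1 : ∫⁻ t in Set.Ioc (0:ℝ) s, π {a : ℝ | t < a} ≤ ENNReal.ofReal s := by
    calc ∫⁻ t in Set.Ioc (0:ℝ) s, π {a : ℝ | t < a} ≤ ∫⁻ _ in Set.Ioc (0:ℝ) s, 1 :=
          lintegral_mono fun t => prob_le_one
      _ = ENNReal.ofReal s := by rw [setLIntegral_one, Real.volume_Ioc, sub_zero]
  have h2 : ∫⁻ t in Set.Ioi s, π {a : ℝ | t < a} ≤ ENNReal.ofReal (Real.sqrt (Real.pi / b)) := by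
    calc ∫⁻ t in Set.Ioi s, π {a : ℝ | t < a}
        ≤ ∫⁻ t in Set.Ioi s, ENNReal.ofReal (Real.exp (-(b * t ^ 2))) := by
          apply setLIntegral_mono (by measurability)
          exact fun t ht => h t (le_of_lt ht)
      _ ≤ ∫⁻ t, ENNReal.ofReal (Real.exp (-(b * t ^ 2))) := setLIntegral_le_lintegral _ _
      _ = ENNReal.ofReal (∫ t : ℝ, Real.exp (-(b * t ^ 2))) := by
          rw [ofReal_integral_eq_lintegral_ofReal]
          · simpa using integrable_exp_neg_mul_sq hb
          · filter_upwards with t using (Real.exp_pos _).le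
      _ = ENNReal.ofReal (Real.sqrt (Real.pi / b)) := by
          rw [show (fun t : ℝ => Real.exp (-(b * t ^ 2))) = fun t : ℝ => Real.exp (-b * t ^ 2) by
            funext t; ring_nf, integral_gaussian]
  calc _ ≤ ENNReal.ofReal s + ENNReal.ofReal (Real.sqrt (Real.pi / b)) := add_le_add h1 h2
    _ = ENNReal.ofReal (s + Real.sqrt (Real.pi / b)) :=
        (ENNReal.ofReal_add hs.le (Real.sqrt_nonneg _)).symm

private lemma sqrt_aux1 (C : ℝ) (hC : 0 < C) : Real.sqrt (Real.pi / (1/C^2)) ≤ 2*C := by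
  have h1 : Real.pi / (1/C^2) ≤ (2*C)^2 := by
    rw [div_div_eq_mul_div, div_one]
    nlinarith [Real.pi_le_four, sq_nonneg C]
  calc Real.sqrt (Real.pi / (1/C^2)) ≤ Real.sqrt ((2*C)^2) := Real.sqrt_le_sqrt h1
    _ = 2*C := Real.sqrt_sq (by positivity)

private lemma sqrt_aux2 (C : ℝ) (hC : 0 < C) : Real.sqrt (Real.pi / (15/(16*C^2))) ≤ 2*C := by
  have h1 : Real.pi / (15/(16*C^2)) ≤ (2*C)^2 := by
    rw [div_div_eq_mul_div, div_le_iff₀ (by norm_num : (0:ℝ) < 15)]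
    nlinarith [Real.pi_lt_d2, sq_nonneg C]
  calc Real.sqrt (Real.pi / (15/(16*C^2))) ≤ Real.sqrt ((2*C)^2) := Real.sqrt_le_sqrt h1
    _ = 2*C := Real.sqrt_sq (by positivity)

theorem stmt_4 : ∃ C' > 0, ∀ (B C ε : ℝ), 0 < B → 0 < C → 0 < ε →
    ∀ (μ ν : Measure ℝ), IsProbabilityMeasure μ → IsProbabilityMeasure ν →
    μ (Set.Icc (-B) B)ᶜ = 0 → ν (Set.Icc (-B) B)ᶜ = 0 →
    (∀ S : Set ℝ, MeasurableSet S →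
      μ S ≤ ENNReal.ofReal (Real.exp ε) * ν S ∧
      ν S ≤ ENNReal.ofReal (Real.exp ε) * μ S) →
    (∫ x, x ∂μ) = 0 →
    (∀ t : ℝ, 4 * C * Real.sqrt ε ≤ t →
      μ {x | t < x} ≤ ENNReal.ofReal (Real.exp (-t ^ 2 / C ^ 2))) →
    (∫ x, x ∂ν) ≤ C' * C * Real.sqrt ε := by
  refine ⟨100, by norm_num, ?_⟩
  intro B C ε hB hC hε μ ν hμp hνp hμB hνB hind hμ0 htail
  have hsε : 0 < Real.sqrt ε := Real.sqrt_pos.2 hε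
  set s : ℝ := 4 * C * Real.sqrt ε with hs_def
  have hs : 0 < s := by positivity
  -- a.e. bounds
  have hμae : ∀ᵐ x ∂μ, x ∈ Set.Icc (-B) B := by
    rw [MeasureTheory.ae_iff]; simpa [Set.compl_def] using hμB
  have hνae : ∀ᵐ x ∂ν, x ∈ Set.Icc (-B) B := by
    rw [MeasureTheory.ae_iff]; simpa [Set.compl_def] using hνB
  -- integrability
  have hμint : Integrable (fun x : ℝ => x) μ := by
    refine Integrable.mono' (integrable_const B) measurable_id.aestronglyMeasurable ?_
    filter_upwards [hμae] with x hx
    rw [Real.norm_eq_abs, abs_le]; exact ⟨hx.1, hx.2⟩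
  have hνint : Integrable (fun x : ℝ => x) ν := by
    refine Integrable.mono' (integrable_const B) measurable_id.aestronglyMeasurable ?_
    filter_upwards [hνae] with x hx
    rw [Real.norm_eq_abs, abs_le]; exact ⟨hx.1, hx.2⟩
  set Pμ := ∫⁻ x, ENNReal.ofReal x ∂μ with hPμ_def
  set Nμ := ∫⁻ x, ENNReal.ofReal (-x) ∂μ with hNμ_def
  set Pν := ∫⁻ x, ENNReal.ofReal x ∂ν with hPν_def
  set Nν := ∫⁻ x, ENNReal.ofReal (-x) ∂ν with hNν_def
  have hEμ : (0:ℝ) = Pμ.toReal - Nμ.toReal := by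
    rw [← hμ0]; exact integral_eq_lintegral_pos_part_sub_lintegral_neg_part hμint
  have hEν : (∫ x, x ∂ν) = Pν.toReal - Nν.toReal :=
    integral_eq_lintegral_pos_part_sub_lintegral_neg_part hνint
  -- finiteness
  have hfin : ∀ (π : Measure ℝ), IsProbabilityMeasure π → (∀ᵐ x ∂π, x ∈ Set.Icc (-B) B) →
      ∫⁻ x, ENNReal.ofReal x ∂π ≤ ENNReal.ofReal B ∧
      ∫⁻ x, ENNReal.ofReal (-x) ∂π ≤ ENNReal.ofReal B := by
    intro π hπ hae
    constructor
    · calc ∫⁻ x, ENNReal.ofReal x ∂π ≤ ∫⁻ _, ENNReal.ofReal B ∂π := by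
            apply lintegral_mono_ae
            filter_upwards [hae] with x hx using ENNReal.ofReal_le_ofReal hx.2
        _ = ENNReal.ofReal B := by simp
    · calc ∫⁻ x, ENNReal.ofReal (-x) ∂π ≤ ∫⁻ _, ENNReal.ofReal B ∂π := by
            apply lintegral_mono_ae
            filter_upwards [hae] with x hx using ENNReal.ofReal_le_ofReal (by linarith [hx.1])
        _ = ENNReal.ofReal B := by simp
  have hPμfin : Pμ ≠ ⊤ := ((hfin μ hμp hμae).1.trans_lt ENNReal.ofReal_lt_top).ne
  have hNμfin : Nμ ≠ ⊤ := ((hfin μ hμp hμae).2.trans_lt ENNReal.ofReal_lt_top).ne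
  have hPνfin : Pν ≠ ⊤ := ((hfin ν hνp hνae).1.trans_lt ENNReal.ofReal_lt_top).ne
  have hNνfin : Nν ≠ ⊤ := ((hfin ν hνp hνae).2.trans_lt ENNReal.ofReal_lt_top).ne
  -- measure comparisons
  have hνμ : ν ≤ (ENNReal.ofReal (Real.exp ε)) • μ := by
    rw [Measure.le_iff]; intro S hS; simpa using (hind S hS).2
  have hμν : μ ≤ (ENNReal.ofReal (Real.exp ε)) • ν := by
    rw [Measure.le_iff]; intro S hS; simpa using (hind S hS).1
  have hcmpP : Pν ≤ ENNReal.ofReal (Real.exp ε) * Pμ := by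
    calc Pν ≤ ∫⁻ x, ENNReal.ofReal x ∂((ENNReal.ofReal (Real.exp ε)) • μ) :=
          lintegral_mono' hνμ le_rfl
      _ = ENNReal.ofReal (Real.exp ε) * Pμ := lintegral_smul_measure _ _
  have hcmpN : Nμ ≤ ENNReal.ofReal (Real.exp ε) * Nν := by
    calc Nμ ≤ ∫⁻ x, ENNReal.ofReal (-x) ∂((ENNReal.ofReal (Real.exp ε)) • ν) :=
          lintegral_mono' hμν le_rfl
      _ = ENNReal.ofReal (Real.exp ε) * Nν := lintegral_smul_measure _ _
  have hA0 : 0 ≤ Pμ.toReal := ENNReal.toReal_nonneg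
  -- real versions of comparisons
  have hrP : Pν.toReal ≤ Real.exp ε * Pμ.toReal := by
    have := ENNReal.toReal_mono (ENNReal.mul_ne_top ENNReal.ofReal_ne_top hPμfin) hcmpP
    rwa [ENNReal.toReal_mul, ENNReal.toReal_ofReal (Real.exp_nonneg ε)] at this
  have hrN : Nμ.toReal ≤ Real.exp ε * Nν.toReal := by
    have := ENNReal.toReal_mono (ENNReal.mul_ne_top ENNReal.ofReal_ne_top hNνfin) hcmpN
    rwa [ENNReal.toReal_mul, ENNReal.toReal_ofReal (Real.exp_nonneg ε)] at this
  rcases le_or_gt ε 1 with hε1 | hε1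
  · -- small ε case
    have hlayμ : Pμ ≤ ENNReal.ofReal (s + Real.sqrt (Real.pi / (1/C^2))) := by
      apply layer_bound μ s (1/C^2) hs (by positivity)
      intro t ht
      have heq : -(1/C^2 * t^2) = -t^2/C^2 := by field_simp
      rw [heq]; exact htail t ht
    have hsqrt1 := sqrt_aux1 C hC
    have hA : Pμ.toReal ≤ s + 2*C := by
      have h2 := ENNReal.toReal_le_of_le_ofReal (by positivity) hlayμ
      linarith
    -- exp bound
    have hexp : Real.exp ε - Real.exp (-ε) ≤ 16*ε := by
      have hu : 1 ≤ Real.exp ε := Real.one_le_exp hε.le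
      have hinv : Real.exp ε * Real.exp (-ε) = 1 := by
        rw [← Real.exp_add]; simp
      have ha := Real.add_one_le_exp (-(2*ε))
      have hb : Real.exp (-(2*ε)) * (Real.exp ε * Real.exp ε) = 1 := by
        rw [← Real.exp_add, ← Real.exp_add, show -(2*ε)+(ε+ε) = (0:ℝ) by ring, Real.exp_zero]
      have hc : Real.exp ε ≤ 3 := by
        calc Real.exp ε ≤ Real.exp 1 := Real.exp_le_exp.2 hε1
          _ ≤ 3 := by linarith [Real.exp_one_lt_d9]
      nlinarith [Real.exp_pos (-(2*ε)), Real.exp_pos (-ε), Real.exp_pos ε,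
        mul_nonneg (sub_nonneg.2 hu) (sub_nonneg.2 hu)]
    have hAN : Pμ.toReal = Nμ.toReal := by linarith
    have hrN' : Real.exp (-ε) * Pμ.toReal ≤ Nν.toReal := by
      have hinv : Real.exp (-ε) * Real.exp ε = 1 := by rw [← Real.exp_add]; simp
      have he := Real.exp_pos (-ε)
      rw [hAN]
      nlinarith [ENNReal.toReal_nonneg (a := Nν)]
    have hεs : ε ≤ Real.sqrt ε := by
      nlinarith [Real.sq_sqrt hε.le, Real.sqrt_le_one.2 hε1, hsε]
    have hss : Real.sqrt ε ≤ 1 := Real.sqrt_le_one.2 hε1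
    rw [hEν]
    have hfinal : Real.exp ε * Pμ.toReal - Real.exp (-ε) * Pμ.toReal ≤ 100 * C * Real.sqrt ε := by
      have h3 : Real.exp ε - Real.exp (-ε) ≥ 0 := by
        have := Real.exp_le_exp.2 (by linarith : -ε ≤ ε); linarith
      calc Real.exp ε * Pμ.toReal - Real.exp (-ε) * Pμ.toReal
          = (Real.exp ε - Real.exp (-ε)) * Pμ.toReal := by ring
        _ ≤ (16*ε) * (s + 2*C) := by
            apply mul_le_mul hexp hA hA0 (by positivity)
        _ ≤ 100 * C * Real.sqrt ε := by
            rw [hs_def]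
            nlinarith [Real.sq_sqrt hε.le, hsε, hC, hεs, hss, hε.le]
    linarith
  · -- large ε case
    have hνtail : ∀ t : ℝ, s ≤ t → ν {x | t < x} ≤
        ENNReal.ofReal (Real.exp (-(15/(16*C^2) * t^2))) := by
      intro t ht
      have hIoi : MeasurableSet {x : ℝ | t < x} := measurableSet_Ioi
      have ht2 : 16*C^2*ε ≤ t^2 := by
        have h1 : s^2 ≤ t^2 := by nlinarith
        have h2 : s^2 = 16*C^2*ε := by
          rw [hs_def, mul_pow, mul_pow, Real.sq_sqrt hε.le]; ring
        linarith
      calc ν {x | t < x} ≤ ENNReal.ofReal (Real.exp ε) * μ {x | t < x} := (hind _ hIoi).2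
        _ ≤ ENNReal.ofReal (Real.exp ε) * ENNReal.ofReal (Real.exp (-t^2/C^2)) :=
            mul_le_mul_right (htail t ht) _
        _ = ENNReal.ofReal (Real.exp (ε + -t^2/C^2)) := by
            rw [Real.exp_add, ENNReal.ofReal_mul (Real.exp_nonneg _)]
        _ ≤ ENNReal.ofReal (Real.exp (-(15/(16*C^2) * t^2))) := by
            apply ENNReal.ofReal_le_ofReal
            apply Real.exp_le_exp.2
            have expand : -(15/(16*C^2)*t^2) - (ε + -t^2/C^2) = (t^2 - 16*C^2*ε)/(16*C^2) := by
              field_simp; ring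
            have hpos : (0:ℝ) ≤ (t^2 - 16*C^2*ε)/(16*C^2) :=
              div_nonneg (by linarith) (by positivity)
            linarith
    have hlayν : Pν ≤ ENNReal.ofReal (s + Real.sqrt (Real.pi / (15/(16*C^2)))) :=
      layer_bound ν s (15/(16*C^2)) hs (by positivity) hνtail
    have hsqrt2 := sqrt_aux2 C hC
    have hPν : Pν.toReal ≤ s + 2*C := by
      have h2 := ENNReal.toReal_le_of_le_ofReal (by positivity) hlayν
      linarith
    have hse : 1 ≤ Real.sqrt ε := by
      rw [show (1:ℝ) = Real.sqrt 1 by simp]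
      exact Real.sqrt_le_sqrt hε1.le
    rw [hEν]
    have : Pν.toReal - Nν.toReal ≤ Pν.toReal := by
      linarith [ENNReal.toReal_nonneg (a := Nν)]
    calc Pν.toReal - Nν.toReal ≤ Pν.toReal := this
      _ ≤ s + 2*C := hPν
      _ ≤ 100 * C * Real.sqrt ε := by rw [hs_def]; nlinarith
end

section
/- Let X be a real random variable with density p satisfying Pr[X ≥ η] ≥ δ for some η ∈ ℝ and δ ∈ (0,1), and assume the exponential tilt is well-defined: E[exp(X)] < ∞. Let Y be the random variable with density proportional to p(y)·exp(y). Then E[Y] ≥ η − 2·log(1/δ). -/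
open MeasureTheory

theorem stmt_5 (p : ℝ → ℝ) (hp0 : ∀ x, 0 ≤ p x) (hpm : Measurable p)
    (hp1 : (∫ x, p x) = 1) (η δ : ℝ) (hδ : δ ∈ Set.Ioo (0 : ℝ) 1)
    (htail : δ ≤ ∫ x in Set.Ici η, p x)
    (hint : Integrable (fun x => p x * Real.exp x))
    (hint2 : Integrable (fun x => x * (p x * Real.exp x))) :
    η - 2 * Real.log (1 / δ) ≤
      (∫ x, x * (p x * Real.exp x)) / (∫ x, p x * Real.exp x) := by
  obtain ⟨hδ0, hδ1⟩ := hδ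
  set L := Real.log (1 / δ) with hL
  have hLpos : 0 < L := Real.log_pos (by rw [lt_div_iff₀ hδ0]; linarith)
  have hL1δ : 1 - δ ≤ L := by
    have h := Real.log_le_sub_one_of_pos hδ0
    have : L = -Real.log δ := by rw [hL, one_div, Real.log_inv]
    linarith
  have heL : Real.exp (-L) = δ := by
    rw [hL, one_div, Real.log_inv, neg_neg, Real.exp_log hδ0]
  set c := η - 2 * L with hc
  have hec : Real.exp c = Real.exp η * (δ * δ) := by
    rw [show c = η + -L + -L by rw [hc]; ring, Real.exp_add, Real.exp_add, heL]
    ring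
  have hpInt : Integrable p := by
    by_contra h
    rw [integral_undef h] at hp1; norm_num at hp1
  -- key pointwise inequality u * exp u ≥ -exp(-1)
  have key : ∀ u : ℝ, -(Real.exp (-1 : ℝ)) ≤ u * Real.exp u := by
    intro u
    rcases le_or_gt 0 u with h | h
    · nlinarith [Real.exp_pos (-1 : ℝ), Real.exp_pos u]
    · have h1 : -u ≤ Real.exp (-u - 1) := by
        have := Real.add_one_le_exp (-u - 1); linarith
      have h2 : 0 < Real.exp u := Real.exp_pos u
      have h3 : Real.exp (-u - 1) * Real.exp u = Real.exp (-1 : ℝ) := by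
        rw [← Real.exp_add]; ring_nf
      nlinarith [mul_le_mul_of_nonneg_right h1 h2.le]
  -- pointwise: (x - c) * (p x * exp x) ≥ -exp(c-1) * p x
  have hptw : ∀ x, -Real.exp (c - 1) * p x ≤ (x - c) * (p x * Real.exp x) := by
    intro x
    have h1 := key (x - c)
    have h2 : Real.exp (x - c) * Real.exp c = Real.exp x := by
      rw [← Real.exp_add]; ring_nf
    have h4 : Real.exp (c - 1) = Real.exp (-1 : ℝ) * Real.exp c := by
      rw [← Real.exp_add]; ring_nf
    have h3 : -(Real.exp (c - 1)) ≤ (x - c) * Real.exp x := by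
      have hc' := Real.exp_pos c
      have h5 := mul_le_mul_of_nonneg_right h1 hc'.le
      rw [mul_assoc, h2] at h5
      nlinarith [h5]
    nlinarith [mul_le_mul_of_nonneg_left h3 (hp0 x)]
  have hpe0 : ∀ x, 0 ≤ p x * Real.exp x := fun x =>
    mul_nonneg (hp0 x) (Real.exp_pos x).le
  -- Z lower bound
  have hIci : Real.exp η * δ ≤ ∫ x in Set.Ici η, p x * Real.exp x := by
    have h1 : ∫ x in Set.Ici η, Real.exp η * p x ≤
        ∫ x in Set.Ici η, p x * Real.exp x := by
      apply setIntegral_mono_on ((hpInt.const_mul _).integrableOn)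
        hint.integrableOn measurableSet_Ici
      intro x hx
      have he : Real.exp η ≤ Real.exp x := Real.exp_le_exp.mpr hx
      nlinarith [hp0 x]
    rw [integral_const_mul] at h1
    nlinarith [Real.exp_pos η]
  have hZ : Real.exp η * δ ≤ ∫ x, p x * Real.exp x := by
    refine le_trans hIci (setIntegral_le_integral hint ?_)
    filter_upwards with x using hpe0 x
  have hZpos : 0 < ∫ x, p x * Real.exp x :=
    lt_of_lt_of_le (by positivity) hZ
  -- integrability of the shifted integrand
  have hintc : Integrable (fun x => (x - c) * (p x * Real.exp x)) := by
    have h := hint2.sub (hint.const_mul c)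
    simpa [Pi.sub_def, sub_mul] using h
  -- lower bound on Ici part
  have hA : 2 * L * Real.exp η * δ ≤
      ∫ x in Set.Ici η, (x - c) * (p x * Real.exp x) := by
    have h1 : ∫ x in Set.Ici η, (2 * L * Real.exp η) * p x ≤
        ∫ x in Set.Ici η, (x - c) * (p x * Real.exp x) := by
      apply setIntegral_mono_on ((hpInt.const_mul _).integrableOn)
        hintc.integrableOn measurableSet_Ici
      intro x hx
      have hx' : η ≤ x := hx
      have he : Real.exp η ≤ Real.exp x := Real.exp_le_exp.mpr hx'
      have hxc : 2 * L ≤ x - c := by rw [hc]; linarith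
      nlinarith [hp0 x, Real.exp_pos η, mul_le_mul_of_nonneg_left he (hp0 x),
        mul_le_mul_of_nonneg_right hxc (mul_nonneg (hp0 x) (Real.exp_pos x).le)]
    rw [integral_const_mul] at h1
    have h2 : 2 * L * Real.exp η * δ ≤ 2 * L * Real.exp η * ∫ x in Set.Ici η, p x := by
      have : 0 ≤ 2 * L * Real.exp η := by positivity
      nlinarith
    linarith
  -- lower bound on Iio part
  have hIio1 : (∫ x in Set.Iio η, p x) ≤ 1 - δ := by
    have hcompl : (∫ x in Set.Ici η, p x) + (∫ x in Set.Iio η, p x) = 1 := by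
      rw [← hp1, ← integral_add_compl measurableSet_Ici hpInt, Set.compl_Ici]
    linarith
  have hB : -(Real.exp (c - 1)) * (1 - δ) ≤
      ∫ x in Set.Iio η, (x - c) * (p x * Real.exp x) := by
    have h1 : ∫ x in Set.Iio η, -Real.exp (c - 1) * p x ≤
        ∫ x in Set.Iio η, (x - c) * (p x * Real.exp x) := by
      apply setIntegral_mono_on ((hpInt.const_mul _).integrableOn)
        hintc.integrableOn measurableSet_Iio
      intro x _
      exact hptw x
    rw [integral_const_mul] at h1
    have h2 : -(Real.exp (c - 1)) * (1 - δ) ≤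
        -Real.exp (c - 1) * ∫ x in Set.Iio η, p x := by
      have he := Real.exp_pos (c - 1)
      nlinarith
    linarith
  -- combine
  have hsplit : (∫ x in Set.Ici η, (x - c) * (p x * Real.exp x)) +
      (∫ x in Set.Iio η, (x - c) * (p x * Real.exp x)) =
      ∫ x, (x - c) * (p x * Real.exp x) := by
    rw [← integral_add_compl measurableSet_Ici hintc, Set.compl_Ici]
  have hec1 : Real.exp (c - 1) = Real.exp η * (δ * δ) * Real.exp (-1 : ℝ) := by
    rw [show c - 1 = c + -1 by ring, Real.exp_add, hec]
  have hnonneg : 0 ≤ ∫ x, (x - c) * (p x * Real.exp x) := by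
    rw [← hsplit]
    have hkey : 0 ≤ 2 * L * Real.exp η * δ - Real.exp (c - 1) * (1 - δ) := by
      rw [hec1]
      have he1 : Real.exp (-1 : ℝ) < 1 := by
        rw [show (1 : ℝ) = Real.exp 0 by simp]
        exact Real.exp_lt_exp.mpr (by norm_num)
      have heη := Real.exp_pos η
      have he1' := Real.exp_pos (-1 : ℝ)
      have hA0 : (0:ℝ) ≤ Real.exp η * δ * (1 - δ) :=
        mul_nonneg (mul_nonneg heη.le hδ0.le) (by linarith)
      have hb : δ * Real.exp (-1 : ℝ) ≤ 1 := by nlinarith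
      nlinarith [mul_le_mul_of_nonneg_right hL1δ
        (by positivity : (0:ℝ) ≤ 2 * Real.exp η * δ),
        mul_le_mul_of_nonneg_left hb hA0]
    linarith
  -- conclude
  have hsub : ∫ x, (x - c) * (p x * Real.exp x) =
      (∫ x, x * (p x * Real.exp x)) - c * ∫ x, p x * Real.exp x := by
    rw [← integral_const_mul, ← integral_sub hint2 (hint.const_mul c)]
    congr 1; funext x; ring
  rw [le_div_iff₀ hZpos]
  rw [hsub] at hnonneg
  linarith
end

section
/- Let a ∈ ℝ^d be a vector such that at least d/2 of the coordinates satisfy |a_i| ≥ ‖a‖₂/(5√d). For t > 0 define K_{1,2}(a,t) = inf{ ‖a'‖₁ + t‖a''‖₂ : a' + a'' = a }. Then there is an absolute constant c > 0 such that for all t < c√d, c·t·‖a‖₂ ≤ K_{1,2}(a,t) ≤ t·‖a‖₂. -/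
/-!
Split the sum of `|a i|` over the set `S` of large coordinates along `a = a' + a''`: the `a'` part
is at most `‖a'‖₁`, and by Cauchy–Schwarz the `a''` part is at most `√d ‖a''‖₂`. Since `#S ≥ d / 2`
and every `|a i|` with `i ∈ S` is at least `‖a‖₂ / (5√d)`, this gives `√d ‖a‖₂ / 10 ≤ ‖a'‖₁ + √d ‖a''‖₂`,
and scaling by `t / √d ≤ 1` yields `t ‖a‖₂ / 10 ≤ ‖a'‖₁ + t ‖a''‖₂`. The upper bound is the
decomposition `a = 0 + a`.
-/

open Finset

lemma Finset.sum_abs_le_sqrt_card_mul_sqrt_sum_sq {ι : Type*} (s : Finset ι) (x : ι → ℝ) :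
    ∑ i ∈ s, |x i| ≤ √(#s) * √(∑ i ∈ s, x i ^ 2) := by
  simpa using Real.sum_mul_le_sqrt_mul_sqrt s (fun _ ↦ 1) (fun i ↦ |x i|)

section KFunctional

variable {ι : Type*} [Fintype ι]

def kFunctionalValues (a : ι → ℝ) (t : ℝ) : Set ℝ :=
  {r | ∃ a' a'' : ι → ℝ, a' + a'' = a ∧ r = (∑ i, |a' i|) + t * √(∑ i, a'' i ^ 2)}

lemma card_filter_mul_le_sum_abs_add_sqrt_card_mul (a' a'' : ι → ℝ) (m : ℝ) :
    #{i | m ≤ |a' i + a'' i|} * m ≤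
      ∑ i, |a' i| + √(Fintype.card ι) * √(∑ i, a'' i ^ 2) := by
  set S : Finset ι := {i | m ≤ |a' i + a'' i|}
  calc #S * m ≤ ∑ i ∈ S, |a' i + a'' i| := by
        simpa using card_nsmul_le_sum S _ m fun i hi ↦ (mem_filter.mp hi).2
    _ ≤ ∑ i ∈ S, |a' i| + ∑ i ∈ S, |a'' i| := by
        rw [← sum_add_distrib]
        exact sum_le_sum fun i _ ↦ abs_add_le _ _
    _ ≤ ∑ i, |a' i| + √(#S) * √(∑ i ∈ S, a'' i ^ 2) := by
        gcongr ?_ + ?_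
        · exact sum_le_sum_of_subset_of_nonneg (subset_univ S) fun i _ _ ↦ abs_nonneg _
        · exact S.sum_abs_le_sqrt_card_mul_sqrt_sum_sq a''
    _ ≤ ∑ i, |a' i| + √(Fintype.card ι) * √(∑ i, a'' i ^ 2) := by
        gcongr _ + √(?_) * √?_
        · exact_mod_cast card_le_univ S
        · exact sum_le_sum_of_subset_of_nonneg (subset_univ S) fun i _ _ ↦ sq_nonneg _

lemma mul_card_filter_mul_le_sqrt_card_mul_of_mem_kFunctionalValues {a : ι → ℝ} {t r : ℝ}
    (ht₀ : 0 ≤ t) (ht : t ≤ √(Fintype.card ι)) (hr : r ∈ kFunctionalValues a t) (m : ℝ) :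
    t * (#{i | m ≤ |a i|} * m) ≤ √(Fintype.card ι) * r := by
  obtain ⟨a', a'', rfl, rfl⟩ := hr
  have h₁ : 0 ≤ ∑ i, |a' i| := sum_nonneg fun i _ ↦ abs_nonneg _
  have h₂ : 0 ≤ √(∑ i, a'' i ^ 2) := Real.sqrt_nonneg _
  calc t * (#{i | m ≤ |(a' + a'') i|} * m)
      ≤ t * (∑ i, |a' i| + √(Fintype.card ι) * √(∑ i, a'' i ^ 2)) :=
        mul_le_mul_of_nonneg_left (card_filter_mul_le_sum_abs_add_sqrt_card_mul a' a'' m) ht₀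
    _ = t * ∑ i, |a' i| + √(Fintype.card ι) * (t * √(∑ i, a'' i ^ 2)) := by ring
    _ ≤ √(Fintype.card ι) * (∑ i, |a' i| + t * √(∑ i, a'' i ^ 2)) := by
        rw [mul_add]; gcongr

lemma mul_sqrt_sum_sq_mem_kFunctionalValues (a : ι → ℝ) (t : ℝ) :
    t * √(∑ i, a i ^ 2) ∈ kFunctionalValues a t :=
  ⟨0, a, zero_add a, by simp⟩

lemma bddBelow_kFunctionalValues (a : ι → ℝ) {t : ℝ} (ht : 0 ≤ t) :
    BddBelow (kFunctionalValues a t) := by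
  refine ⟨0, ?_⟩
  rintro r ⟨a', a'', -, rfl⟩
  have := sum_nonneg fun i (_ : i ∈ univ) ↦ abs_nonneg (a' i)
  positivity

end KFunctional

theorem stmt_6 : ∃ c > 0, ∀ (d : ℕ) (a : Fin d → ℝ), 1 ≤ d → a ≠ 0 →
    (d : ℝ) ≤ 2 * (Finset.univ.filter
        (fun i => Real.sqrt (∑ j, a j ^ 2) / (5 * Real.sqrt d) ≤ |a i|)).card →
    ∀ t : ℝ, 0 < t → t < c * Real.sqrt d →
      c * t * Real.sqrt (∑ j, a j ^ 2) ≤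
        sInf {r : ℝ | ∃ a' a'' : Fin d → ℝ, a' + a'' = a ∧
          r = (∑ i, |a' i|) + t * Real.sqrt (∑ i, a'' i ^ 2)} ∧
      sInf {r : ℝ | ∃ a' a'' : Fin d → ℝ, a' + a'' = a ∧
          r = (∑ i, |a' i|) + t * Real.sqrt (∑ i, a'' i ^ 2)}
        ≤ t * Real.sqrt (∑ j, a j ^ 2) := by
  refine ⟨1 / 10, by norm_num, fun d a _ _ hcard t ht htd ↦ ?_⟩
  change 1 / 10 * t * √(∑ j, a j ^ 2) ≤ sInf (kFunctionalValues a t) ∧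
    sInf (kFunctionalValues a t) ≤ t * √(∑ j, a j ^ 2)
  set N := √(∑ j, a j ^ 2)
  have hd : 0 < √(d : ℝ) := by linarith
  refine ⟨le_csInf ⟨_, mul_sqrt_sum_sq_mem_kFunctionalValues a t⟩ fun r hr ↦ ?_,
    csInf_le (bddBelow_kFunctionalValues a ht.le) (mul_sqrt_sum_sq_mem_kFunctionalValues a t)⟩
  have hsplit := mul_card_filter_mul_le_sqrt_card_mul_of_mem_kFunctionalValues ht.le
    (by rw [Fintype.card_fin]; linarith) hr (N / (5 * √d))
  rw [Fintype.card_fin] at hsplit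
  have hsq : √(d : ℝ) ^ 2 = d := Real.sq_sqrt d.cast_nonneg
  have hlarge : √(d : ℝ) * (1 / 10 * t * N) ≤ t * (#{i | N / (5 * √d) ≤ |a i|} * (N / (5 * √d))) := by
    calc √(d : ℝ) * (1 / 10 * t * N) = t * ((d / 2) * (N / (5 * √d))) := by
          field_simp; rw [hsq]; ring
      _ ≤ _ := by gcongr; linarith
  exact le_of_mul_le_mul_left (hlarge.trans hsplit) hd
end

section
/- Fix integers N, d ≥ 1 and k with 1 ≤ k ≤ c·d/log N for a sufficiently small constant c, and assume N ≥ 2. Let A ∈ {−1,1}^{d×N} be a uniformly random sign matrix. Then with probability at least 1 − 2^{−Ω(d)}, every set of k distinct columns i₁,…,i_k of A satisfies ‖A_{*,i₁} + ⋯ + A_{*,i_k}‖₂ ≤ √(2kd). -/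
open Finset Real MeasureTheory

lemma gauss_shift (c : ℝ) : ∫ x : ℝ, Real.exp (c * x - x ^ 2 / 2) =
    Real.sqrt (2 * Real.pi) * Real.exp (c ^ 2 / 2) := by
  have h1 : ∀ x : ℝ, c * x - x ^ 2 / 2 = c ^ 2 / 2 + (-(1/2) * (x + (-c)) ^ 2) := by
    intro x; ring
  simp_rw [h1, Real.exp_add, MeasureTheory.integral_const_mul]
  rw [integral_add_right_eq_self (fun x : ℝ => Real.exp (-(1/2) * x ^ 2)) (-c),
    integral_gaussian]
  rw [mul_comm]
  norm_num
  ring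

lemma gauss_integrable (c : ℝ) :
    MeasureTheory.Integrable (fun x : ℝ => Real.exp (c * x - x ^ 2 / 2)) := by
  have h1 : ∀ x : ℝ, c * x - x ^ 2 / 2 = c ^ 2 / 2 + (-(1/2) * (x + (-c)) ^ 2) := by
    intro x; ring
  simp_rw [h1, Real.exp_add]
  exact ((integrable_exp_neg_mul_sq (by norm_num : (0:ℝ) < 1/2)).comp_add_right (-c)).const_mul _

lemma row_bound (N k : ℕ) (hk : 1 ≤ k) (J : Finset (Fin N)) (hJ : J.card = k) :
    ∑ v : Fin N → Bool,
        Real.exp ((∑ i ∈ J, (if v i then (1:ℝ) else -1)) ^ 2 / (4 * k)) ≤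
      2 ^ N * Real.sqrt 2 := by
  have hkpos : (0:ℝ) < k := by exact_mod_cast hk
  set a : ℝ := (Real.sqrt (2 * (k:ℝ)))⁻¹ with ha
  have ha2 : a ^ 2 = (2 * (k:ℝ))⁻¹ := by
    rw [ha, inv_pow, Real.sq_sqrt (by positivity)]
  have hkN : k ≤ N := by
    simpa [hJ] using Finset.card_le_card (Finset.subset_univ J)
  -- rewrite each summand via the Gaussian integral
  have key : ∀ s : ℝ, Real.exp (s ^ 2 / (4 * k)) =
      (Real.sqrt (2 * Real.pi))⁻¹ * ∫ x : ℝ, Real.exp (a * s * x - x ^ 2 / 2) := by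
    intro s
    rw [gauss_shift, ← mul_assoc, inv_mul_cancel₀ (by positivity), one_mul]
    congr 1
    rw [mul_pow, ha2]
    field_simp
    ring
  simp_rw [key]
  rw [← Finset.mul_sum,
    ← MeasureTheory.integral_finset_sum _ (fun v _ => gauss_integrable _)]
  -- pointwise rewrite of the inner sum
  have hpt : ∀ x : ℝ, ∑ v : Fin N → Bool,
      Real.exp (a * (∑ i ∈ J, (if v i then (1:ℝ) else -1)) * x - x ^ 2 / 2)
      = 2 ^ (N - k) * (2 * Real.cosh (a * x)) ^ k * Real.exp (-(x ^ 2 / 2)) := by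
    intro x
    have : ∀ v : Fin N → Bool,
        Real.exp (a * (∑ i ∈ J, (if v i then (1:ℝ) else -1)) * x - x ^ 2 / 2)
        = (∏ i : Fin N, (if i ∈ J then
            Real.exp (a * x * (if v i then (1:ℝ) else -1)) else 1))
            * Real.exp (-(x ^ 2 / 2)) := by
      intro v
      rw [Finset.prod_ite_mem, Finset.univ_inter, ← Real.exp_sum, ← Real.exp_add]
      congr 1
      rw [← Finset.mul_sum]
      ring
    simp_rw [this, ← Finset.sum_mul]
    congr 1
    have hps := Finset.prod_univ_sum (fun _ : Fin N => (univ : Finset Bool))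
      (fun i b => if i ∈ J then Real.exp (a * x * (if b then (1:ℝ) else -1)) else 1)
    rw [Fintype.piFinset_univ] at hps
    rw [← hps]
    have : ∀ i : Fin N, (∑ b : Bool, (if i ∈ J then
        Real.exp (a * x * (if b then (1:ℝ) else -1)) else 1))
        = if i ∈ J then 2 * Real.cosh (a * x) else 2 := by
      intro i
      by_cases h : i ∈ J <;> simp [h, Real.cosh_eq, Fintype.sum_bool]
      ring
    rw [Fintype.prod_congr _ _ this, ← Finset.prod_sdiff (Finset.subset_univ J)]
    rw [Finset.prod_ite_of_false (s := Finset.univ \ J)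
        (fun i hi => (Finset.mem_sdiff.mp hi).2),
      Finset.prod_ite_of_true (s := J) (fun i hi => hi)]
    rw [Finset.prod_const, Finset.prod_const, hJ, Finset.card_sdiff_of_subset (Finset.subset_univ J),
        Finset.card_univ, Fintype.card_fin, hJ]
  have hkk : (2:ℝ) ^ (N - k) * 2 ^ k = 2 ^ N := by
    rw [← pow_add, Nat.sub_add_cancel hkN]
  have hInt1 : MeasureTheory.Integrable (fun x : ℝ => ∑ v : Fin N → Bool,
      Real.exp (a * (∑ i ∈ J, (if v i then (1:ℝ) else -1)) * x - x ^ 2 / 2)) :=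
    MeasureTheory.integrable_finset_sum _ (fun v _ => gauss_integrable _)
  have hInt2 : MeasureTheory.Integrable (fun x : ℝ => (2:ℝ) ^ N * Real.exp (-(1/4) * x ^ 2)) :=
    (integrable_exp_neg_mul_sq (by norm_num : (0:ℝ) < 1/4)).const_mul _
  have hle : ∀ x : ℝ, (∑ v : Fin N → Bool,
      Real.exp (a * (∑ i ∈ J, (if v i then (1:ℝ) else -1)) * x - x ^ 2 / 2))
      ≤ (2:ℝ) ^ N * Real.exp (-(1/4) * x ^ 2) := by
    intro x
    rw [hpt x]
    have h1 : Real.cosh (a * x) ^ k ≤ Real.exp ((a * x) ^ 2 / 2) ^ k :=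
      pow_le_pow_left₀ (Real.cosh_pos (x := a * x)).le (Real.cosh_le_exp_half_sq _) k
    have h2 : Real.exp ((a * x) ^ 2 / 2) ^ k = Real.exp (x ^ 2 / 4) := by
      rw [← Real.exp_nat_mul, mul_pow, ha2]
      congr 1
      field_simp
      ring
    have h3 : (2:ℝ) ^ (N - k) * (2 * Real.cosh (a * x)) ^ k * Real.exp (-(x ^ 2 / 2))
        ≤ (2:ℝ) ^ (N - k) * (2 * Real.exp ((a * x) ^ 2 / 2)) ^ k * Real.exp (-(x ^ 2 / 2)) := by
      have := Real.cosh_pos (x := a * x)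
      gcongr
      exact Real.cosh_le_exp_half_sq _
    refine h3.trans (le_of_eq ?_)
    rw [mul_pow, h2]
    rw [show (2:ℝ)^(N-k) * ((2:ℝ)^k * Real.exp (x^2/4)) * Real.exp (-(x^2/2))
        = ((2:ℝ)^(N-k) * 2^k) * (Real.exp (x^2/4) * Real.exp (-(x^2/2))) by ring,
      hkk, ← Real.exp_add]
    congr 1
    ring
  calc (Real.sqrt (2 * Real.pi))⁻¹ * ∫ x : ℝ, (∑ v : Fin N → Bool,
      Real.exp (a * (∑ i ∈ J, (if v i then (1:ℝ) else -1)) * x - x ^ 2 / 2))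
      ≤ (Real.sqrt (2 * Real.pi))⁻¹ * ∫ x : ℝ, (2:ℝ) ^ N * Real.exp (-(1/4) * x ^ 2) := by
        gcongr
        exact hle
    _ = 2 ^ N * Real.sqrt 2 := by
        rw [MeasureTheory.integral_const_mul, integral_gaussian]
        rw [show Real.pi / (1/4) = 4 * Real.pi by ring, show (4:ℝ) * Real.pi = 2^2 * Real.pi by norm_num,
          Real.sqrt_mul (by positivity), Real.sqrt_mul (by positivity),
          Real.sqrt_sq (by norm_num)]
        rw [show Real.sqrt 2 * Real.sqrt Real.pi = Real.sqrt 2 * Real.sqrt Real.pi from rfl]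
        have h2 : Real.sqrt 2 * Real.sqrt 2 = 2 := Real.mul_self_sqrt (by norm_num)
        have hpi : (0:ℝ) < Real.sqrt Real.pi := Real.sqrt_pos.mpr Real.pi_pos
        have hs2 : (0:ℝ) < Real.sqrt 2 := Real.sqrt_pos.mpr (by norm_num)
        field_simp
        linear_combination -h2

lemma chernoff (N d k : ℕ) (hk : 1 ≤ k) (J : Finset (Fin N)) (hJ : J.card = k) :
    ((Finset.univ.filter (fun A : Fin d → Fin N → Bool =>
        2 * (k:ℝ) * d < ∑ r, (∑ i ∈ J, (if A r i then (1:ℝ) else -1)) ^ 2)).card : ℝ)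
      ≤ (2:ℝ) ^ (N * d) * (Real.sqrt 2 * Real.exp (-(1/2 : ℝ))) ^ d := by
  have hkpos : (0:ℝ) < k := by exact_mod_cast hk
  set T : (Fin d → Fin N → Bool) → ℝ :=
    fun A => ∑ r, (∑ i ∈ J, (if A r i then (1:ℝ) else -1)) ^ 2 with hT
  have step1 : ((Finset.univ.filter (fun A : Fin d → Fin N → Bool =>
      2 * (k:ℝ) * d < T A)).card : ℝ)
      ≤ ∑ A : Fin d → Fin N → Bool, Real.exp ((T A - 2 * k * d) / (4 * k)) := by
    calc ((Finset.univ.filter (fun A : Fin d → Fin N → Bool =>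
          2 * (k:ℝ) * d < T A)).card : ℝ)
        = ∑ A ∈ Finset.univ.filter (fun A : Fin d → Fin N → Bool =>
            2 * (k:ℝ) * d < T A), 1 := by
          rw [Finset.sum_const, nsmul_eq_mul, mul_one]
      _ ≤ ∑ A ∈ Finset.univ.filter (fun A : Fin d → Fin N → Bool =>
            2 * (k:ℝ) * d < T A), Real.exp ((T A - 2 * k * d) / (4 * k)) := by
          refine Finset.sum_le_sum fun A hA => Real.one_le_exp ?_
          have := (Finset.mem_filter.mp hA).2
          have h4 : (0:ℝ) < 4 * k := by positivity
          exact div_nonneg (by linarith) h4.le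
      _ ≤ ∑ A : Fin d → Fin N → Bool, Real.exp ((T A - 2 * k * d) / (4 * k)) :=
          Finset.sum_le_sum_of_subset_of_nonneg (Finset.filter_subset _ _)
            (fun A _ _ => (Real.exp_pos _).le)
  have step2 : ∀ A : Fin d → Fin N → Bool,
      Real.exp ((T A - 2 * k * d) / (4 * k)) =
        Real.exp (-(1/2:ℝ)) ^ d * ∏ r : Fin d,
          Real.exp ((∑ i ∈ J, (if A r i then (1:ℝ) else -1)) ^ 2 / (4 * k)) := by
    intro A
    rw [← Real.exp_sum, ← Real.exp_nat_mul, ← Real.exp_add]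
    congr 1
    rw [hT]
    simp only []
    rw [sub_div, Finset.sum_div,
      show (2:ℝ) * k * d / (4 * k) = (d:ℝ) * (1/2) by field_simp; ring]
    ring
  have step3 : ∑ A : Fin d → Fin N → Bool, ∏ r : Fin d,
      Real.exp ((∑ i ∈ J, (if A r i then (1:ℝ) else -1)) ^ 2 / (4 * k))
      = (∑ v : Fin N → Bool,
          Real.exp ((∑ i ∈ J, (if v i then (1:ℝ) else -1)) ^ 2 / (4 * k))) ^ d := by
    have hps := Finset.prod_univ_sum (fun _ : Fin d => (Finset.univ : Finset (Fin N → Bool)))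
      (fun (_ : Fin d) (v : Fin N → Bool) =>
        Real.exp ((∑ i ∈ J, (if v i then (1:ℝ) else -1)) ^ 2 / (4 * k)))
    rw [Fintype.piFinset_univ] at hps
    rw [← hps, Finset.prod_const, Finset.card_univ, Fintype.card_fin]
  calc ((Finset.univ.filter (fun A : Fin d → Fin N → Bool =>
        2 * (k:ℝ) * d < ∑ r, (∑ i ∈ J, (if A r i then (1:ℝ) else -1)) ^ 2)).card : ℝ)
      = ((Finset.univ.filter (fun A : Fin d → Fin N → Bool =>
        2 * (k:ℝ) * d < T A)).card : ℝ) := rfl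
    _ ≤ ∑ A : Fin d → Fin N → Bool, Real.exp ((T A - 2 * k * d) / (4 * k)) := step1
    _ = Real.exp (-(1/2:ℝ)) ^ d * (∑ v : Fin N → Bool,
          Real.exp ((∑ i ∈ J, (if v i then (1:ℝ) else -1)) ^ 2 / (4 * k))) ^ d := by
        simp_rw [step2]
        rw [← Finset.mul_sum, step3]
    _ ≤ Real.exp (-(1/2:ℝ)) ^ d * ((2:ℝ) ^ N * Real.sqrt 2) ^ d := by
        have hrow := row_bound N k hk J hJ
        have hnn : (0:ℝ) ≤ ∑ v : Fin N → Bool,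
            Real.exp ((∑ i ∈ J, (if v i then (1:ℝ) else -1)) ^ 2 / (4 * k)) :=
          Finset.sum_nonneg fun v _ => (Real.exp_pos _).le
        gcongr
    _ = (2:ℝ) ^ (N * d) * (Real.sqrt 2 * Real.exp (-(1/2 : ℝ))) ^ d := by
        rw [mul_pow, mul_pow, ← pow_mul]
        ring

set_option maxHeartbeats 2000000 in
theorem stmt_16 : ∃ c > 0, ∃ c' > 0, ∀ (N d k : ℕ), 2 ≤ N → 1 ≤ k → 1 ≤ d →
    (k : ℝ) ≤ c * d / Real.log N →
    1 - (2 : ℝ) ^ (-(c' * (d : ℝ))) ≤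
      ((Finset.univ.filter (fun A : Fin d → Fin N → Bool =>
          ∀ J : Finset (Fin N), J.card = k →
            Real.sqrt (∑ r, (∑ i ∈ J, (if A r i then (1 : ℝ) else -1)) ^ 2)
              ≤ Real.sqrt (2 * k * d))).card : ℝ) /
        (Fintype.card (Fin d → Fin N → Bool)) := by
  refine ⟨7/100, by norm_num, 1/10, by norm_num, fun N d k hN hk hd hkc => ?_⟩
  have htot : (Fintype.card (Fin d → Fin N → Bool) : ℝ) = 2 ^ (N * d) := by
    rw [Fintype.card_fun, Fintype.card_fun, Fintype.card_bool, Fintype.card_fin,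
      Fintype.card_fin]
    push_cast
    rw [← pow_mul]
  -- union bound on the bad set
  have hsub : Finset.univ.filter (fun A : Fin d → Fin N → Bool =>
      ¬ ∀ J : Finset (Fin N), J.card = k →
        Real.sqrt (∑ r, (∑ i ∈ J, (if A r i then (1 : ℝ) else -1)) ^ 2)
          ≤ Real.sqrt (2 * k * d)) ⊆
      (Finset.powersetCard k (Finset.univ : Finset (Fin N))).biUnion
      (fun J => Finset.univ.filter (fun A : Fin d → Fin N → Bool =>
        2 * (k:ℝ) * d < ∑ r, (∑ i ∈ J, (if A r i then (1:ℝ) else -1)) ^ 2)) := by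
    intro A hA
    have hA' := (Finset.mem_filter.mp hA).2
    have hA'' : ∃ J : Finset (Fin N), J.card = k ∧
        ¬ Real.sqrt (∑ r, (∑ i ∈ J, (if A r i then (1:ℝ) else -1)) ^ 2)
          ≤ Real.sqrt (2 * k * d) := by
      by_contra hcon
      push_neg at hcon
      exact hA' fun J hJ => hcon J hJ
    obtain ⟨J, hJk, hJgt⟩ := hA''
    refine Finset.mem_biUnion.mpr ⟨J, Finset.mem_powersetCard_univ.mpr hJk, ?_⟩
    refine Finset.mem_filter.mpr ⟨Finset.mem_univ _, ?_⟩
    by_contra hcon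
    push_neg at hcon
    exact hJgt (Real.sqrt_le_sqrt hcon)
  have hBcard : (((Finset.univ.filter (fun A : Fin d → Fin N → Bool =>
      ¬ ∀ J : Finset (Fin N), J.card = k →
        Real.sqrt (∑ r, (∑ i ∈ J, (if A r i then (1 : ℝ) else -1)) ^ 2)
          ≤ Real.sqrt (2 * k * d))).card : ℕ) : ℝ) ≤ (N.choose k : ℝ) *
      ((2:ℝ) ^ (N * d) * (Real.sqrt 2 * Real.exp (-(1/2 : ℝ))) ^ d) := by
    calc (((Finset.univ.filter (fun A : Fin d → Fin N → Bool =>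
        ¬ ∀ J : Finset (Fin N), J.card = k →
          Real.sqrt (∑ r, (∑ i ∈ J, (if A r i then (1 : ℝ) else -1)) ^ 2)
            ≤ Real.sqrt (2 * k * d))).card : ℕ) : ℝ)
        ≤ (((Finset.powersetCard k (Finset.univ : Finset (Fin N))).biUnion
        (fun J => Finset.univ.filter (fun A : Fin d → Fin N → Bool =>
          2 * (k:ℝ) * d < ∑ r, (∑ i ∈ J, (if A r i then (1:ℝ) else -1)) ^ 2))).card : ℝ) := by
          exact_mod_cast Finset.card_le_card hsub
      _ ≤ ∑ J ∈ Finset.powersetCard k (Finset.univ : Finset (Fin N)),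
          ((Finset.univ.filter (fun A : Fin d → Fin N → Bool =>
            2 * (k:ℝ) * d < ∑ r, (∑ i ∈ J, (if A r i then (1:ℝ) else -1)) ^ 2)).card : ℝ) := by
          exact_mod_cast Finset.card_biUnion_le
      _ ≤ ∑ J ∈ Finset.powersetCard k (Finset.univ : Finset (Fin N)),
          ((2:ℝ) ^ (N * d) * (Real.sqrt 2 * Real.exp (-(1/2 : ℝ))) ^ d) := by
          refine Finset.sum_le_sum fun J hJ => ?_
          exact chernoff N d k hk J (Finset.mem_powersetCard_univ.mp hJ)
      _ = (N.choose k : ℝ) * ((2:ℝ) ^ (N * d) * (Real.sqrt 2 * Real.exp (-(1/2 : ℝ))) ^ d) := by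
          rw [Finset.sum_const, Finset.card_powersetCard, Finset.card_univ, Fintype.card_fin,
            nsmul_eq_mul]
  have hlogN : (0:ℝ) < Real.log N :=
    Real.log_pos (by exact_mod_cast hN)
  have hkd : (k:ℝ) * Real.log N ≤ (7/100) * d := by
    rw [← le_div_iff₀ hlogN]
    exact hkc
  have hNk : ((N.choose k : ℕ) : ℝ) ≤ Real.exp ((7/100) * d) := by
    calc ((N.choose k : ℕ) : ℝ) ≤ ((N ^ k : ℕ) : ℝ) := by
          exact_mod_cast Nat.choose_le_pow N k
      _ = Real.exp (Real.log N) ^ k := by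
          rw [Real.exp_log (by positivity : (0:ℝ) < (N:ℝ))]
          push_cast
          ring
      _ = Real.exp ((k:ℝ) * Real.log N) := by
          rw [← Real.exp_nat_mul]
      _ ≤ Real.exp ((7/100) * d) := Real.exp_le_exp.mpr hkd
  have hnum : Real.exp ((7/100) * d) * (Real.sqrt 2 * Real.exp (-(1/2 : ℝ))) ^ d
      ≤ (2:ℝ) ^ (-(1/10 * (d:ℝ))) := by
    have h2 : Real.sqrt 2 * Real.exp (-(1/2 : ℝ)) =
        Real.exp (Real.log 2 / 2 - 1/2) := by
      rw [Real.exp_sub, ← Real.log_sqrt (by norm_num : (0:ℝ) ≤ 2),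
        Real.exp_log (Real.sqrt_pos.mpr (by norm_num))]
      rw [Real.exp_neg]
      ring
    rw [h2, ← Real.exp_nat_mul, ← Real.exp_add,
      Real.rpow_def_of_pos (by norm_num : (0:ℝ) < 2), Real.exp_le_exp]
    have hl := Real.log_two_lt_d9
    have hl2 := Real.log_two_gt_d9
    have hd1 : (0:ℝ) ≤ (d:ℝ) := Nat.cast_nonneg d
    nlinarith [hd1, hl, hl2]
  have hBfin : (((Finset.univ.filter (fun A : Fin d → Fin N → Bool =>
      ¬ ∀ J : Finset (Fin N), J.card = k →
        Real.sqrt (∑ r, (∑ i ∈ J, (if A r i then (1 : ℝ) else -1)) ^ 2)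
          ≤ Real.sqrt (2 * k * d))).card : ℕ) : ℝ)
      ≤ (2:ℝ) ^ (-(1/10 * (d:ℝ))) * 2 ^ (N * d) := by
    refine hBcard.trans ?_
    calc (N.choose k : ℝ) *
        ((2:ℝ) ^ (N * d) * (Real.sqrt 2 * Real.exp (-(1/2 : ℝ))) ^ d)
        ≤ Real.exp ((7/100) * d) *
        ((2:ℝ) ^ (N * d) * (Real.sqrt 2 * Real.exp (-(1/2 : ℝ))) ^ d) := by
          gcongr
      _ = (Real.exp ((7/100) * d) * (Real.sqrt 2 * Real.exp (-(1/2 : ℝ))) ^ d)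
          * 2 ^ (N * d) := by ring
      _ ≤ (2:ℝ) ^ (-(1/10 * (d:ℝ))) * 2 ^ (N * d) :=
          mul_le_mul_of_nonneg_right hnum (by positivity)
  have hGB : (((Finset.univ.filter (fun A : Fin d → Fin N → Bool =>
        ∀ J : Finset (Fin N), J.card = k →
          Real.sqrt (∑ r, (∑ i ∈ J, (if A r i then (1 : ℝ) else -1)) ^ 2)
            ≤ Real.sqrt (2 * k * d))).card : ℕ) : ℝ)
      + (((Finset.univ.filter (fun A : Fin d → Fin N → Bool =>
        ¬ ∀ J : Finset (Fin N), J.card = k →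
          Real.sqrt (∑ r, (∑ i ∈ J, (if A r i then (1 : ℝ) else -1)) ^ 2)
            ≤ Real.sqrt (2 * k * d))).card : ℕ) : ℝ)
      = (Fintype.card (Fin d → Fin N → Bool) : ℝ) := by
    have h := Finset.card_filter_add_card_filter_not
      (s := (Finset.univ : Finset (Fin d → Fin N → Bool)))
      (p := fun A : Fin d → Fin N → Bool =>
        ∀ J : Finset (Fin N), J.card = k →
          Real.sqrt (∑ r, (∑ i ∈ J, (if A r i then (1 : ℝ) else -1)) ^ 2)
            ≤ Real.sqrt (2 * k * d))
    rw [← Nat.cast_add, h, Finset.card_univ]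
  have htotpos : (0:ℝ) < (Fintype.card (Fin d → Fin N → Bool) : ℝ) := by
    rw [htot]; positivity
  rw [le_div_iff₀ htotpos]
  nlinarith [hGB, hBfin, htot, htotpos]
end
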